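/- Let G be a graph with n vertices and m edges, and let k ≥ 2 be an integer with m ≥ k(k−1)/2. Let G' be the clique-reduction graph of (G, k). Then G contains a clique on k vertices if and only if G' contains a nonempty path P with |V(P)| ≤ k(k−1)/2 and |N_{G'}(V(P))| ≤ m − k(k−1)/2 + k. -/

import Mathlib

/-!
A path of the clique-reduction graph `G'` that meets `V'` or `C` has every vertex of `C` off the
path in its neighbourhood, which is too many. So a short path with a small neighbourhood runs
inside the clique `E'` and visits the edge-vertices of a set `F` of `L ≥ 1` edges of `G`; its
neighbourhood is then exactly the other `m - L` edge-vertices together with the `t` endpoints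
of `F`, and the bound becomes `t + C(k, 2) - L ≤ k`. As `L ≤ C(t, 2)` and
`C(k, 2) ≥ C(t, 2) + t (k - t)`, this forces `t = k` and `L = C(k, 2)`: the endpoints of `F`
form a `k`-clique. Conversely, the edge-vertices of the `C(k, 2)` edges of a `k`-clique, in any
order, form such a path.
-/

open SimpleGraph

/-- The open neighborhood of a vertex set `S`: vertices outside `S` adjacent to some
vertex of `S`. -/
def openNbhd {V : Type*} (G : SimpleGraph V) (S : Set V) : Set V :=
  {v | v ∉ S ∧ ∃ w ∈ S, G.Adj v w}

/-- The clique-reduction graph of `(G, k)`: its vertices are a copy `V'` of `V(G)`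
(the `Sum.inl` vertices), one vertex `v_e` for each edge `e` of `G`
(the `Sum.inr (Sum.inl e)` vertices) and a set `C` of `m + k + 1` further vertices
(the `Sum.inr (Sum.inr i)` vertices), where `m` is the number of edges of `G`.
Each `v_e` is adjacent to the copies of both endpoints of `e`; the edge-vertices
form a clique; `C` forms a clique; and every vertex of `C` is adjacent to every
vertex of `V'`. -/
def cliqueRed {V : Type*} [Fintype V] [DecidableEq V] (G : SimpleGraph V)
    [DecidableRel G.Adj] (k : ℕ) :
    SimpleGraph (V ⊕ (G.edgeSet ⊕ Fin (G.edgeFinset.card + k + 1))) :=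
  SimpleGraph.fromRel (fun a b =>
    match a, b with
    | Sum.inl v, Sum.inr (Sum.inl e) => v ∈ (e : Sym2 V)
    | Sum.inr (Sum.inl e), Sum.inr (Sum.inl e') => e ≠ e'
    | Sum.inr (Sum.inr i), Sum.inr (Sum.inr j) => i ≠ j
    | Sum.inl _, Sum.inr (Sum.inr _) => True
    | _, _ => False)

open Finset

theorem SimpleGraph.IsClique.exists_isPath_toFinset_support {α : Type*} [DecidableEq α]
    {H : SimpleGraph α} {s : Finset α} (hs : H.IsClique (s : Set α)) (hne : s.Nonempty) :
    ∃ (u v : α) (p : H.Walk u v), p.IsPath ∧ p.support.toFinset = s := by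
  have hl : s.toList ≠ [] := mt Finset.toList_eq_nil.mp hne.ne_empty
  have hpair : s.toList.Pairwise H.Adj :=
    s.nodup_toList.imp_of_mem fun ha hb hab => hs (by simpa using ha) (by simpa using hb) hab
  refine ⟨_, _, Walk.ofSupport _ hl hpair.isChain, ?_, ?_⟩
  · simpa [Walk.isPath_def] using s.nodup_toList
  · simp

theorem Nat.choose_two_add_mul_le_choose_two_add (t d : ℕ) :
    t.choose 2 + t * d ≤ (t + d).choose 2 := by
  induction d with
  | zero => simp
  | succ d ih =>
    rw [← add_assoc, Nat.choose_succ_succ', Nat.choose_one_right]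
    nlinarith

theorem Nat.eq_and_eq_choose_two_of_add_choose_two_sub_le {k t L : ℕ} (hL : 0 < L)
    (hLt : L ≤ t.choose 2) (htk : t + (k.choose 2 - L) ≤ k) : t = k ∧ L = k.choose 2 := by
  obtain ⟨d, rfl⟩ : ∃ d, k = t + d := ⟨k - t, by omega⟩
  have hchoose := Nat.choose_two_add_mul_le_choose_two_add t d
  have ht : 2 ≤ t := by
    by_contra! h
    rw [Nat.choose_eq_zero_of_lt h] at hLt
    omega
  have htd : t * d ≤ d := by omega
  have hd : d = 0 := by nlinarith
  subst hd
  omega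

namespace SimpleGraph

variable {V : Type*} [DecidableEq V] {G : SimpleGraph V}

def endpoints (F : Finset G.edgeSet) : Finset V :=
  F.biUnion fun e => (e : Sym2 V).toFinset

theorem mem_endpoints {F : Finset G.edgeSet} {v : V} :
    v ∈ endpoints F ↔ ∃ e ∈ F, v ∈ (e : Sym2 V) := by
  simp [endpoints]

theorem map_subtype_subset_image_offDiag_endpoints (F : Finset G.edgeSet) :
    F.map (Function.Embedding.subtype _) ⊆ (endpoints F).offDiag.image Sym2.mk.uncurry := by
  intro z hz
  obtain ⟨⟨e, he⟩, heF, rfl⟩ := mem_map.1 hz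
  induction e using Sym2.ind with
  | h a b =>
    have hmem (v : V) (hv : v ∈ s(a, b)) : v ∈ endpoints F := mem_endpoints.2 ⟨_, heF, hv⟩
    exact mem_image.2 ⟨(a, b), mem_offDiag.2 ⟨hmem a (by simp), hmem b (by simp),
      (G.mem_edgeSet.1 he).ne⟩, rfl⟩

theorem card_le_choose_two_card_endpoints (F : Finset G.edgeSet) :
    #F ≤ (#(endpoints F)).choose 2 := by
  simpa [Sym2.card_image_offDiag] using card_le_card (map_subtype_subset_image_offDiag_endpoints F)

theorem isClique_endpoints_of_choose_two_le_card {F : Finset G.edgeSet}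
    (h : (#(endpoints F)).choose 2 ≤ #F) : G.IsClique (endpoints F : Set V) := by
  have hF := eq_of_subset_of_card_le (map_subtype_subset_image_offDiag_endpoints F)
    (by simpa [Sym2.card_image_offDiag] using h)
  intro a ha b hb hab
  have hmem : s(a, b) ∈ F.map (Function.Embedding.subtype _) :=
    hF ▸ mem_image.2 ⟨(a, b), mem_offDiag.2 ⟨ha, hb, hab⟩, rfl⟩
  obtain ⟨e, -, he⟩ := mem_map.1 hmem
  exact G.mem_edgeSet.1 (he ▸ e.2)

variable [DecidableRel G.Adj]

def cliqueEdges (G : SimpleGraph V) [DecidableRel G.Adj] (S : Finset V) : Finset G.edgeSet :=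
  (S.offDiag.image Sym2.mk.uncurry).subtype (· ∈ G.edgeSet)

theorem card_cliqueEdges {S : Finset V} (hS : G.IsClique (S : Set V)) :
    #(G.cliqueEdges S) = (#S).choose 2 := by
  rw [cliqueEdges, card_subtype, filter_true_of_mem, Sym2.card_image_offDiag]
  simp only [mem_image, mem_offDiag]
  rintro _ ⟨⟨a, b⟩, ⟨ha, hb, hab⟩, rfl⟩
  exact hS ha hb hab

variable (G) in
theorem endpoints_cliqueEdges_subset (S : Finset V) : endpoints (G.cliqueEdges S) ⊆ S := by
  intro v hv
  obtain ⟨⟨e, _⟩, he, hve⟩ := mem_endpoints.1 hv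
  obtain ⟨⟨a, b⟩, hab, rfl⟩ := mem_image.1 (mem_subtype.1 he)
  rw [mem_offDiag] at hab
  rcases Sym2.mem_iff.1 hve with rfl | rfl
  exacts [hab.1, hab.2.1]

end SimpleGraph

section cliqueRed

variable {V : Type*} [Fintype V] [DecidableEq V] {G : SimpleGraph V} [DecidableRel G.Adj]
  {k : ℕ}

@[simp]
theorem cliqueRed_adj_inl_inr_inl (v : V) (e : G.edgeSet) :
    (cliqueRed G k).Adj (.inl v) (.inr (.inl e)) ↔ v ∈ (e : Sym2 V) := by
  simp [cliqueRed]

@[simp]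
theorem cliqueRed_adj_inr_inl_inr_inl (e e' : G.edgeSet) :
    (cliqueRed G k).Adj (.inr (.inl e)) (.inr (.inl e')) ↔ e ≠ e' := by
  simp only [cliqueRed, fromRel_adj, ne_eq, Sum.inr.injEq, Sum.inl.injEq]
  tauto

@[simp]
theorem cliqueRed_not_adj_inr_inr_inr_inl (i : Fin (#G.edgeFinset + k + 1)) (e : G.edgeSet) :
    ¬ (cliqueRed G k).Adj (.inr (.inr i)) (.inr (.inl e)) := by
  simp [cliqueRed]

variable (G k) in
def edgeVertex : G.edgeSet ↪ V ⊕ (G.edgeSet ⊕ Fin (#G.edgeFinset + k + 1)) :=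
  Function.Embedding.inl.trans Function.Embedding.inr

omit [DecidableEq V] in
@[simp]
theorem edgeVertex_apply (e : G.edgeSet) : edgeVertex G k e = .inr (.inl e) := rfl

theorem cliqueRed_adj_inr_inr_of_notMem_range {i : Fin (#G.edgeFinset + k + 1)}
    {x : V ⊕ (G.edgeSet ⊕ Fin (#G.edgeFinset + k + 1))} (hx : x ∉ Set.range (edgeVertex G k))
    (hxi : x ≠ .inr (.inr i)) : (cliqueRed G k).Adj (.inr (.inr i)) x := by
  rcases x with v | e | j
  · simp [cliqueRed]
  · simp at hx
  · simp only [ne_eq, Sum.inr.injEq] at hxi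
    simp [cliqueRed, Ne.symm hxi]

theorem isClique_cliqueRed_map_edgeVertex (F : Finset G.edgeSet) :
    (cliqueRed G k).IsClique (F.map (edgeVertex G k) : Set _) := by
  rintro _ ha _ hb hab
  obtain ⟨e, -, rfl⟩ := mem_map.1 (mem_coe.1 ha)
  obtain ⟨e', -, rfl⟩ := mem_map.1 (mem_coe.1 hb)
  simpa using hab

theorem openNbhd_cliqueRed_map_edgeVertex {F : Finset G.edgeSet} (hF : F.Nonempty) :
    openNbhd (cliqueRed G k) (F.map (edgeVertex G k)) =
      ((Fᶜ.map (edgeVertex G k) ∪ (endpoints F).map .inl : Finset _) : Set _) := by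
  ext x
  rcases x with v | e | i <;> simp [openNbhd, mem_endpoints, -Subtype.exists, -Subtype.forall]
  intro he
  obtain ⟨a, ha⟩ := hF
  exact ⟨a, ha, fun h => he (h ▸ ha)⟩

theorem ncard_openNbhd_cliqueRed_map_edgeVertex {F : Finset G.edgeSet} (hF : F.Nonempty) :
    (openNbhd (cliqueRed G k) (F.map (edgeVertex G k))).ncard =
      #G.edgeFinset - #F + #(endpoints F) := by
  have hdisj : Disjoint (Fᶜ.map (edgeVertex G k)) ((endpoints F).map .inl) := by
    simp [Finset.disjoint_left]
  rw [openNbhd_cliqueRed_map_edgeVertex hF, Set.ncard_coe_finset, card_union_of_disjoint hdisj,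
    card_map, card_map, card_compl, edgeFinset_card]

theorem add_le_card_add_ncard_openNbhd_cliqueRed
    {S : Finset (V ⊕ (G.edgeSet ⊕ Fin (#G.edgeFinset + k + 1)))} {x}
    (hxS : x ∈ S) (hx : x ∉ Set.range (edgeVertex G k)) :
    #G.edgeFinset + k + 1 ≤ #S + (openNbhd (cliqueRed G k) S).ncard := by
  let C : Finset (V ⊕ (G.edgeSet ⊕ Fin (#G.edgeFinset + k + 1))) :=
    univ.map (Function.Embedding.inr.trans Function.Embedding.inr)
  have hC : ((C \ S : Finset _) : Set _) ⊆ openNbhd (cliqueRed G k) S := by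
    intro y hy
    obtain ⟨hyC, hyS⟩ := mem_sdiff.1 (mem_coe.1 hy)
    obtain ⟨i, -, rfl⟩ := mem_map.1 hyC
    exact ⟨hyS, x, hxS,
      cliqueRed_adj_inr_inr_of_notMem_range hx (ne_of_mem_of_not_mem hxS hyS)⟩
  have h1 := Set.ncard_le_ncard hC
  have h2 := le_card_sdiff S C
  rw [Set.ncard_coe_finset] at h1
  rw [card_map, card_univ, Fintype.card_fin] at h2
  omega

theorem exists_isPath_cliqueRed_of_isNClique (hk : 2 ≤ k) {S : Finset V}
    (hS : G.IsNClique k S) :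
    ∃ (u v : V ⊕ (G.edgeSet ⊕ Fin (#G.edgeFinset + k + 1))) (p : (cliqueRed G k).Walk u v),
      p.IsPath ∧ p.support.length ≤ k.choose 2 ∧
      (openNbhd (cliqueRed G k) {x | x ∈ p.support}).ncard ≤
        #G.edgeFinset - k.choose 2 + k := by
  set F := G.cliqueEdges S
  have hF : #F = k.choose 2 := by rw [card_cliqueEdges hS.isClique, hS.card_eq]
  have hFne : F.Nonempty := card_pos.1 (hF ▸ Nat.choose_pos hk)
  obtain ⟨u, v, p, hp, hsupp⟩ :=
    (isClique_cliqueRed_map_edgeVertex F).exists_isPath_toFinset_support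
      (hFne.map (f := edgeVertex G k))
  refine ⟨u, v, p, hp, ?_, ?_⟩
  · rw [← List.toFinset_card_of_nodup hp.support_nodup, hsupp, card_map, hF]
  · rw [← List.coe_toFinset, hsupp, ncard_openNbhd_cliqueRed_map_edgeVertex hFne, hF,
      ← hS.card_eq]
    exact Nat.add_le_add_left (card_le_card (endpoints_cliqueEdges_subset G S)) _

theorem exists_isNClique_of_ncard_openNbhd_cliqueRed_le (hm : k.choose 2 ≤ #G.edgeFinset)
    {S : Finset (V ⊕ (G.edgeSet ⊕ Fin (#G.edgeFinset + k + 1)))} (hne : S.Nonempty)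
    (hS : #S ≤ k.choose 2)
    (hN : (openNbhd (cliqueRed G k) S).ncard ≤ #G.edgeFinset - k.choose 2 + k) :
    ∃ T : Finset V, G.IsNClique k T := by
  have hrange (x) (hx : x ∈ S) : x ∈ univ.map (edgeVertex G k) := by
    by_contra h
    have := add_le_card_add_ncard_openNbhd_cliqueRed hx (by simpa using h)
    omega
  obtain ⟨F, -, rfl⟩ := subset_map_iff.1 hrange
  have hFne : F.Nonempty := map_nonempty.1 hne
  have hFm : #F ≤ #G.edgeFinset := by simpa [edgeFinset_card] using card_le_univ F
  rw [card_map] at hS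
  rw [ncard_openNbhd_cliqueRed_map_edgeVertex hFne] at hN
  obtain ⟨ht, hL⟩ := Nat.eq_and_eq_choose_two_of_add_choose_two_sub_le (k := k) hFne.card_pos
    (card_le_choose_two_card_endpoints F) (by omega)
  exact ⟨endpoints F, isClique_endpoints_of_choose_two_le_card (by rw [ht, hL]), ht⟩

end cliqueRed

/-- `G` contains a clique on `k` vertices iff the clique-reduction graph `G'` contains
a nonempty path `P` with `|V(P)| ≤ k(k−1)/2` and
`|N_{G'}(V(P))| ≤ m − k(k−1)/2 + k`. -/
theorem stmt_16 {V : Type*} [Fintype V] [DecidableEq V] (G : SimpleGraph V)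
    [DecidableRel G.Adj] (k : ℕ) (hk : 2 ≤ k)
    (hm : k * (k - 1) / 2 ≤ G.edgeFinset.card) :
    (∃ S : Finset V, G.IsNClique k S) ↔
      ∃ (u v : V ⊕ (G.edgeSet ⊕ Fin (G.edgeFinset.card + k + 1)))
        (p : (cliqueRed G k).Walk u v), p.IsPath ∧
        p.support.length ≤ k * (k - 1) / 2 ∧
        (openNbhd (cliqueRed G k) {x | x ∈ p.support}).ncard ≤
          G.edgeFinset.card - k * (k - 1) / 2 + k := by
  rw [← Nat.choose_two_right] at hm ⊢
  constructor
  · rintro ⟨S, hS⟩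
    exact exists_isPath_cliqueRed_of_isNClique hk hS
  · rintro ⟨u, v, p, hp, hlen, hN⟩
    refine exists_isNClique_of_ncard_openNbhd_cliqueRed_le hm (S := p.support.toFinset)
      ⟨u, by simp⟩ ?_ ?_
    · rwa [List.toFinset_card_of_nodup hp.support_nodup]
    · rwa [List.coe_toFinset]
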